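/- Let (G,I,O,λ) be a labelled open graph with gflow, and let G' be the induced subgraph on V' = O ∪ {v ∈ V : λ(v) = XY}, with λ' the restriction of λ. Then (G',I,O,λ') has a gflow. -/

import Mathlib

open Set

/-- The three measurement planes. -/
inductive MPlane | XY | XZ | YZ
deriving DecidableEq

/-- The odd neighbourhood of a set `K`: vertices with an odd number of neighbours in `K`. -/
def oddNbhd {V : Type*} (G : SimpleGraph V) (K : Set V) : Set V :=
  {u | Odd (K ∩ G.neighborSet u).ncard}

/-- `(g, prec)` is a gflow for the labelled open graph `(G, I, O, lam)`. -/
structure GFlow {V : Type*} (G : SimpleGraph V) (I O : Set V) (lam : V → MPlane)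
    (g : V → Set V) (prec : V → V → Prop) : Prop where
  irrefl : ∀ v, ¬ prec v v
  trans : ∀ u v w, prec u v → prec v w → prec u w
  noInput : ∀ v, v ∉ O → g v ∩ I = ∅
  g1 : ∀ v, v ∉ O → ∀ w ∈ g v, w ≠ v → prec v w
  g2 : ∀ v, v ∉ O → ∀ w ∈ oddNbhd G (g v), w ≠ v → prec v w
  gXY : ∀ v, v ∉ O → lam v = MPlane.XY → v ∉ g v ∧ v ∈ oddNbhd G (g v)
  gXZ : ∀ v, v ∉ O → lam v = MPlane.XZ → v ∈ g v ∧ v ∈ oddNbhd G (g v)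
  gYZ : ∀ v, v ∉ O → lam v = MPlane.YZ → v ∈ g v ∧ v ∉ oddNbhd G (g v)

/-! Replacing `g v` by `g v ∆ g u` whenever `u ∈ g v` and `v ≠ u` only adds vertices and odd
neighbours lying strictly after `v`, so it yields a gflow again, in which `u` belongs to no
correction set but its own. A non-XY non-output `u` does lie in `g u`, so doing this for each of
them in turn (a later step never brings back an earlier one) leaves every other correction set
inside `O ∪ {λ = XY}`. Odd neighbourhoods in the induced subgraph are the traces of those in `G`,
so these correction sets form a gflow of the induced subgraph. -/

open scoped symmDiff

theorem Set.odd_ncard_symmDiff_iff {α : Type*} [Finite α] (s t : Set α) :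
    Odd (s ∆ t).ncard ↔ (Odd s.ncard ↔ ¬ Odd t.ncard) := by
  have hsplit : (s ∆ t).ncard + (s ∩ t).ncard = (s ∪ t).ncard := by
    rw [← Set.ncard_union_eq (Set.disjoint_left.2 fun x hx hx' => by grind)]
    congr 1
    ext x
    simp only [Set.mem_union, Set.mem_symmDiff, Set.mem_inter_iff]
    tauto
  have hunion := Set.ncard_union_add_ncard_inter s t
  simp only [Nat.odd_iff]
  omega

theorem oddNbhd_symmDiff {V : Type*} [Finite V] (G : SimpleGraph V) (A B : Set V) :
    oddNbhd G (A ∆ B) = oddNbhd G A ∆ oddNbhd G B := by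
  ext u
  simp only [oddNbhd, Set.mem_symmDiff, Set.mem_ofPred_eq, Set.inter_symmDiff_distrib_right,
    Set.odd_ncard_symmDiff_iff]
  tauto

theorem oddNbhd_induce {V : Type*} (G : SimpleGraph V) (S : Set V) (K : Set S) :
    oddNbhd (G.induce S) K = Subtype.val ⁻¹' oddNbhd G (Subtype.val '' K) := by
  ext w
  simp only [oddNbhd, Set.mem_ofPred_eq, Set.mem_preimage]
  rw [← Set.ncard_image_of_injective _ Subtype.val_injective]
  congr! 2
  ext x
  constructor
  · rintro ⟨y, ⟨hyK, hyw⟩, rfl⟩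
    exact ⟨⟨y, hyK, rfl⟩, hyw⟩
  · rintro ⟨⟨y, hyK, rfl⟩, hyw⟩
    exact ⟨y, ⟨hyK, hyw⟩, rfl⟩

open Classical in
def cancelVertex {V : Type*} (g : V → Set V) (u : V) : V → Set V :=
  fun v => g v ∆ if u ∈ g v ∧ v ≠ u then g u else ∅

section cancelVertex

variable {V : Type*} {g : V → Set V} {u v w : V}

theorem self_notMem_cancelVertex (hu : u ∈ g u) (hv : v ≠ u) : u ∉ cancelVertex g u v := by
  unfold cancelVertex
  split_ifs with h
  · simp [Set.mem_symmDiff, hu, h.1]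
  · simpa [Set.mem_symmDiff] using fun hv' => h ⟨hv', hv⟩

theorem notMem_cancelVertex (hv : w ∉ g v) (hu : w ∉ g u) : w ∉ cancelVertex g u v := by
  unfold cancelVertex
  split_ifs <;> simp [Set.mem_symmDiff, hu, hv]

end cancelVertex

namespace GFlow

variable {V : Type*} {G : SimpleGraph V} {I O : Set V} {lam : V → MPlane}
  {g : V → Set V} {prec : V → V → Prop}

theorem mem_self_of_ne_XY (hG : GFlow G I O lam g prec) {u : V} (huO : u ∉ O)
    (hu : lam u ≠ MPlane.XY) : u ∈ g u := by
  cases h : lam u with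
  | XY => exact absurd h hu
  | XZ => exact (hG.gXZ u huO h).1
  | YZ => exact (hG.gYZ u huO h).1

theorem notMem_of_prec (hG : GFlow G I O lam g prec) {u v : V} (huO : u ∉ O) (h : prec v u) :
    v ∉ g u ∧ v ∉ oddNbhd G (g u) := by
  have hvu : v ≠ u := fun e => hG.irrefl v (e ▸ h)
  exact ⟨fun hv => hG.irrefl v (hG.trans v u v h (hG.g1 u huO v hv hvu)),
    fun hv => hG.irrefl v (hG.trans v u v h (hG.g2 u huO v hv hvu))⟩

theorem restrict (hG : GFlow G I O lam g prec) (S : Set V) (hS : ∀ v ∈ S, v ∉ O → g v ⊆ S) :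
    GFlow (G.induce S) (Subtype.val ⁻¹' I) (Subtype.val ⁻¹' O) (fun v => lam v)
      (fun v => Subtype.val ⁻¹' g v) (fun u v => prec u v) := by
  have hodd : ∀ v : S, (v : V) ∉ O →
      oddNbhd (G.induce S) (Subtype.val ⁻¹' g v) = Subtype.val ⁻¹' oddNbhd G (g v) := fun v hv => by
    rw [oddNbhd_induce, Set.image_preimage_eq_of_subset (by simpa using hS v v.2 hv)]
  refine ⟨fun v => hG.irrefl v, fun u v w => hG.trans u v w, fun v hv => ?_,
    fun v hv w hw hwv => hG.g1 v hv w hw (Subtype.coe_ne_coe.2 hwv),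
    fun v hv w hw hwv => hG.g2 v hv w (by rwa [hodd v hv] at hw) (Subtype.coe_ne_coe.2 hwv),
    fun v hv hl => ?_, fun v hv hl => ?_, fun v hv hl => ?_⟩
  · rw [← Set.preimage_inter, hG.noInput v hv, Set.preimage_empty]
  all_goals rw [hodd v hv]
  exacts [hG.gXY v hv hl, hG.gXZ v hv hl, hG.gYZ v hv hl]

theorem symmDiff_of_prec [Finite V] (hG : GFlow G I O lam g prec) (K : V → Set V)
    (hK : ∀ v, v ∉ O → ∀ w ∈ K v, prec v w)
    (hK_odd : ∀ v, v ∉ O → ∀ w ∈ oddNbhd G (K v), prec v w)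
    (hK_input : ∀ v, v ∉ O → K v ∩ I = ∅) :
    GFlow G I O lam (fun v => g v ∆ K v) prec := by
  have hself : ∀ v, v ∉ O →
      (v ∈ g v ∆ K v ↔ v ∈ g v) ∧ (v ∈ oddNbhd G (g v ∆ K v) ↔ v ∈ oddNbhd G (g v)) := by
    intro v hvO
    have hK_self : v ∉ K v := fun hv => hG.irrefl v (hK v hvO v hv)
    have hK_odd_self : v ∉ oddNbhd G (K v) := fun hv => hG.irrefl v (hK_odd v hvO v hv)
    simp [oddNbhd_symmDiff, Set.mem_symmDiff, hK_self, hK_odd_self]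
  refine ⟨hG.irrefl, hG.trans, fun v hvO => ?_, fun v hvO w hw hwv => ?_,
    fun v hvO w hw hwv => ?_, fun v hvO hl => ?_, fun v hvO hl => ?_, fun v hvO hl => ?_⟩
  · rw [Set.inter_symmDiff_distrib_right, hG.noInput v hvO, hK_input v hvO, symmDiff_self,
      Set.bot_eq_empty]
  · rcases hw with ⟨hw, -⟩ | ⟨hw, -⟩
    exacts [hG.g1 v hvO w hw hwv, hK v hvO w hw]
  · rw [oddNbhd_symmDiff] at hw
    rcases hw with ⟨hw, -⟩ | ⟨hw, -⟩
    exacts [hG.g2 v hvO w hw hwv, hK_odd v hvO w hw]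
  all_goals rw [(hself v hvO).1, (hself v hvO).2]
  exacts [hG.gXY v hvO hl, hG.gXZ v hvO hl, hG.gYZ v hvO hl]

theorem cancelVertex [Finite V] (hG : GFlow G I O lam g prec) {u : V} (huO : u ∉ O) :
    GFlow G I O lam (cancelVertex g u) prec := by
  have after_of_mem : ∀ v, v ∉ O → u ∈ g v → v ≠ u → ∀ w, (w ≠ u → prec u w) → prec v w := by
    intro v hvO huv hvu w hw
    have hvu' : prec v u := hG.g1 v hvO u huv hvu.symm
    obtain rfl | hwu := eq_or_ne w u
    exacts [hvu', hG.trans v u w hvu' (hw hwu)]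
  refine hG.symmDiff_of_prec _ (fun v hvO w hw => ?_) (fun v hvO w hw => ?_) (fun v hvO => ?_) <;>
    split_ifs at * with h
  · exact after_of_mem v hvO h.1 h.2 w (hG.g1 u huO w hw)
  · exact hw.elim
  · exact after_of_mem v hvO h.1 h.2 w (hG.g2 u huO w hw)
  · simp [oddNbhd] at hw
  · exact hG.noInput u huO
  · exact Set.empty_inter I

theorem exists_correction_avoiding [Finite V] (hG : GFlow G I O lam g prec) (D : Set V)
    (hD : ∀ u ∈ D, u ∉ O ∧ lam u ≠ MPlane.XY) :
    ∃ g', GFlow G I O lam g' prec ∧ ∀ v, ∀ u ∈ D, u ≠ v → u ∉ g' v := by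
  induction D, D.toFinite using Set.Finite.induction_on generalizing g with
  | empty => exact ⟨g, hG, by simp⟩
  | @insert a D haD _ ih =>
    obtain ⟨haO, ha⟩ := hD a (Set.mem_insert a D)
    obtain ⟨g', hG', hg'⟩ := ih hG fun u hu => hD u (Set.mem_insert_of_mem a hu)
    refine ⟨_root_.cancelVertex g' a, hG'.cancelVertex haO, fun v u hu huv => ?_⟩
    obtain rfl | hu := hu
    · exact self_notMem_cancelVertex (hG'.mem_self_of_ne_XY haO ha) huv.symm
    · exact notMem_cancelVertex (hg' v u hu huv) (hg' a u hu (ne_of_mem_of_not_mem hu haD))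

end GFlow

/-- Deleting all non-XY-measured non-output vertices (i.e. restricting to the
induced subgraph on `O ∪ {v | λ(v) = XY}`) preserves the existence of gflow. -/
theorem gflow_restrict_XY {V : Type*} [Fintype V]
    (G : SimpleGraph V) (I O : Set V) (lam : V → MPlane)
    (h : ∃ g prec, GFlow G I O lam g prec) :
    ∃ (g' : ↥(O ∪ {v : V | lam v = MPlane.XY}) → Set ↥(O ∪ {v : V | lam v = MPlane.XY}))
      (prec' : ↥(O ∪ {v : V | lam v = MPlane.XY}) → ↥(O ∪ {v : V | lam v = MPlane.XY}) → Prop),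
      GFlow (G.induce (O ∪ {v : V | lam v = MPlane.XY}))
        (Subtype.val ⁻¹' I) (Subtype.val ⁻¹' O)
        (fun v => lam v.val) g' prec' := by
  obtain ⟨g, prec, hG⟩ := h
  set S := O ∪ {v : V | lam v = MPlane.XY}
  obtain ⟨g', hG', hg'⟩ := 
    hG.exists_correction_avoiding Sᶜ fun u hu => by simpa [S, not_or] using hu
  refine ⟨_, _, hG'.restrict S fun v hv _ w hw => ?_⟩
  by_contra hwS
  exact hg' v w hwS (ne_of_mem_of_not_mem hv hwS).symm hw
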